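/- arXiv:2306.11250 — 2 statements merged into one kernel-verified Lean document; each statement's English description precedes it below -/
import Mathlib

section
/- Let s, τ, u₀ ∈ ℝ with s > 0, τ > 0, and 0 < u₀ < s, and define u : ℝ → ℝ by u(t) = s·exp(2st/τ) / (exp(2st/τ) − 1 + s/u₀). Then for every t ∈ ℝ, u(t) = s/2 if and only if t = (τ/(2s)) · log((s − u₀)/u₀); i.e., the sigmoidal transition point of the mode occurs exactly at time (τ/(2s))·log((s − u₀)/u₀), determined by the initial value u₀ and the target singular value s. -/
/-!
Clearing the denominator, `u t = s / 2` says exactly `exp (2 * s * t / τ) = s / u₀ - 1`,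
i.e. `exp (2 * s * t / τ) = (s - u₀) / u₀`. Since `u₀ < s` the right-hand side is positive,
so taking logarithms solves for `t`.
-/

open Real

theorem mul_div_eq_half_iff {K : Type*} [Field K] [NeZero (2 : K)] {a x y : K}
    (ha : a ≠ 0) (hy : y ≠ 0) : a * x / y = a / 2 ↔ 2 * x = y := by
  rw [div_eq_div_iff hy two_ne_zero, mul_assoc, mul_comm x, mul_right_inj' ha]

theorem mul_div_eq_iff_eq_div_mul {K : Type*} [Field K] {a b t c : K}
    (ha : a ≠ 0) (hb : b ≠ 0) : a * t / b = c ↔ t = b / a * c := by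
  rw [div_eq_iff hb, div_mul_eq_mul_div, eq_div_iff ha]
  constructor <;> intro h <;> linear_combination h

theorem Real.exp_eq_iff_eq_log {x y : ℝ} (hy : 0 < y) : exp x = y ↔ x = log y :=
  ⟨by rintro rfl; exact (log_exp x).symm, by rintro rfl; exact exp_log hy⟩

theorem logistic_eq_half_iff {s u₀ E : ℝ} (hu₀ : 0 < u₀) (hu₀s : u₀ < s) (hE : 0 ≤ E) :
    s * E / (E - 1 + s / u₀) = s / 2 ↔ E = (s - u₀) / u₀ := by
  have hc : 1 < s / u₀ := (one_lt_div hu₀).2 hu₀s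
  rw [mul_div_eq_half_iff (hu₀.trans hu₀s).ne' (by linarith), sub_div, div_self hu₀.ne']
  constructor <;> intro h <;> linarith

theorem logistic_transition_point_general (s τ u₀ : ℝ) (hτ : 0 < τ)
    (hu₀ : 0 < u₀) (hu₀s : u₀ < s)
    (u : ℝ → ℝ)
    (hu : u = fun t => s * exp (2 * s * t / τ) / (exp (2 * s * t / τ) - 1 + s / u₀)) :
    ∀ t : ℝ, u t = s / 2 ↔ t = τ / (2 * s) * log ((s - u₀) / u₀) := by
  intro t
  subst hu
  have hs : 0 < s := hu₀.trans hu₀s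
  rw [logistic_eq_half_iff hu₀ hu₀s (exp_pos _).le,
    exp_eq_iff_eq_log (div_pos (sub_pos.2 hu₀s) hu₀),
    mul_div_eq_iff_eq_div_mul (by positivity) hτ.ne']

/-- The sigmoidal transition point of the logistic mode trajectory
`u(t) = s·e^{2st/τ}/(e^{2st/τ} − 1 + s/u₀)`: `u(t) = s/2` holds exactly at time
`t = (τ/(2s))·log((s − u₀)/u₀)`, determined by the initial value `u₀` and the target `s`. -/
theorem logistic_transition_point (s τ u₀ : ℝ) (hs : 0 < s) (hτ : 0 < τ)
    (hu₀ : 0 < u₀) (hu₀s : u₀ < s)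
    (u : ℝ → ℝ)
    (hu : u = fun t => s * exp (2 * s * t / τ) / (exp (2 * s * t / τ) - 1 + s / u₀)) :
    ∀ t : ℝ, u t = s / 2 ↔ t = τ / (2 * s) * log ((s - u₀) / u₀) :=
  logistic_transition_point_general s τ u₀ hτ hu₀ hu₀s u hu
end

section
/- Let s, u₀ ∈ ℝ with 0 < u₀ < s, and let a, b : ℝ → ℝ be differentiable functions satisfying, for all t ∈ ℝ, a′(t) = b(t)·(s − a(t)·b(t)) and b′(t) = a(t)·(s − a(t)·b(t)), with balanced initialization a(0) = b(0) and a(0)² = u₀. Then for all t ≥ 0 the mode strength satisfies a(t)·b(t) = s·exp(2st) / (exp(2st) − 1 + s/u₀), and hence the corresponding mode of the cumulative weight update follows the trajectory a(t)·b(t) − u₀ = s·exp(2st)/(exp(2st) − 1 + s/u₀) − u₀. -/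
/-!
Both steps are uniqueness for a scalar ODE, each reduced to the linear equation `y' = g y`,
`y 0 = 0`, whose only solution is `0` (multiply by the integrating factor `exp (-∫₀ᵗ g)`).
First, `a - b` solves such an equation with `g = -(s - a b)`, so balance is preserved and the
product `u = a b` solves the logistic equation `u' = 2 u (s - u)`. Second, the difference of two
solutions of `y' = r y (s - y)` solves `y' = r (s - u - v) y`, so `u` agrees with the explicit
logistic curve through `u₀`.
-/

open Real

theorem eq_zero_of_hasDerivAt_eq_mul {y g : ℝ → ℝ} (hg : Continuous g)
    (hy : ∀ t, HasDerivAt y (g t * y t) t) (h0 : y 0 = 0) (t : ℝ) : y t = 0 := by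
  set G : ℝ → ℝ := fun t => ∫ x in (0 : ℝ)..t, g x
  have hG : ∀ t, HasDerivAt G (g t) t := fun t =>
    (hg.integral_hasStrictDerivAt 0 t).hasDerivAt
  have hdamped : ∀ t, HasDerivAt (fun t => y t * exp (-G t)) 0 t := fun t =>
    ((hy t).mul (hG t).neg.exp).congr_deriv (by ring)
  have hconst : y t * exp (-G t) = y 0 * exp (-G 0) :=
    is_const_of_deriv_eq_zero (fun t => (hdamped t).differentiableAt)
      (fun t => (hdamped t).deriv) t 0
  rw [h0, zero_mul] at hconst
  exact (mul_eq_zero.mp hconst).resolve_right (exp_ne_zero _)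

theorem eq_of_hasDerivAt_balanced_flow {s : ℝ} {a b : ℝ → ℝ}
    (ha : ∀ t, HasDerivAt a (b t * (s - a t * b t)) t)
    (hb : ∀ t, HasDerivAt b (a t * (s - a t * b t)) t) (hbal : a 0 = b 0) (t : ℝ) :
    a t = b t := by
  have hcont : Continuous fun t => -(s - a t * b t) := by
    have : Continuous a := continuous_iff_continuousAt.mpr fun t => (ha t).continuousAt
    have : Continuous b := continuous_iff_continuousAt.mpr fun t => (hb t).continuousAt
    fun_prop
  have hdiff : ∀ t, HasDerivAt (fun t => a t - b t) (-(s - a t * b t) * (a t - b t)) t :=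
    fun t => ((ha t).sub (hb t)).congr_deriv (by ring)
  exact sub_eq_zero.mp (eq_zero_of_hasDerivAt_eq_mul hcont hdiff (sub_eq_zero.mpr hbal) t)

theorem eq_of_hasDerivAt_logistic {r s : ℝ} {u v : ℝ → ℝ}
    (hu : ∀ t, HasDerivAt u (r * u t * (s - u t)) t)
    (hv : ∀ t, HasDerivAt v (r * v t * (s - v t)) t) (h0 : u 0 = v 0) (t : ℝ) :
    u t = v t := by
  have hcont : Continuous fun t => r * (s - u t - v t) := by
    have : Continuous u := continuous_iff_continuousAt.mpr fun t => (hu t).continuousAt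
    have : Continuous v := continuous_iff_continuousAt.mpr fun t => (hv t).continuousAt
    fun_prop
  have hdiff : ∀ t, HasDerivAt (fun t => u t - v t) (r * (s - u t - v t) * (u t - v t)) t :=
    fun t => ((hu t).sub (hv t)).congr_deriv (by ring)
  exact sub_eq_zero.mp (eq_zero_of_hasDerivAt_eq_mul hcont hdiff (sub_eq_zero.mpr h0) t)

noncomputable def logisticCurve (s k t : ℝ) : ℝ :=
  s * exp (2 * s * t) / (exp (2 * s * t) - 1 + k)

theorem logisticCurve_zero (s k : ℝ) : logisticCurve s k 0 = s / k := by
  simp [logisticCurve]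

theorem hasDerivAt_logisticCurve {s k : ℝ} (hk : 1 ≤ k) (t : ℝ) :
    HasDerivAt (logisticCurve s k)
      (2 * logisticCurve s k t * (s - logisticCurve s k t)) t := by
  have hden : exp (2 * s * t) - 1 + k ≠ 0 := by linarith [exp_pos (2 * s * t)]
  have hexp : HasDerivAt (fun t => exp (2 * s * t)) (exp (2 * s * t) * (2 * s)) t := by
    simpa using ((hasDerivAt_id t).const_mul (2 * s)).exp
  refine ((hexp.const_mul s).div ((hexp.sub_const 1).add_const k) hden).congr_deriv ?_
  simp only [logisticCurve]
  generalize exp (2 * s * t) = E at hden ⊢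
  field_simp

/-- Main theorem (τ = 1): under the mode-wise gradient flow `a′ = b(s − ab)`,
`b′ = a(s − ab)` with balanced initialization `a(0) = b(0)` of strength `a(0)² = u₀ ∈ (0, s)`,
the mode strength follows `a(t)·b(t) = s·e^{2st}/(e^{2st} − 1 + s/u₀)` for `t ≥ 0`, and hence
the corresponding mode of the cumulative weight update follows the trajectory
`a(t)·b(t) − u₀ = s·e^{2st}/(e^{2st} − 1 + s/u₀) − u₀`. -/
theorem mode_strength_trajectory (s u₀ : ℝ) (hu₀ : 0 < u₀) (hu₀s : u₀ < s)
    (a b : ℝ → ℝ)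
    (ha : ∀ t : ℝ, HasDerivAt a (b t * (s - a t * b t)) t)
    (hb : ∀ t : ℝ, HasDerivAt b (a t * (s - a t * b t)) t)
    (hbal : a 0 = b 0) (hinit : a 0 ^ 2 = u₀) :
    ∀ t : ℝ, 0 ≤ t →
      a t * b t = s * exp (2 * s * t) / (exp (2 * s * t) - 1 + s / u₀) ∧
      a t * b t - u₀ = s * exp (2 * s * t) / (exp (2 * s * t) - 1 + s / u₀) - u₀ := by
  have hab := eq_of_hasDerivAt_balanced_flow ha hb hbal
  have hprod : ∀ t, HasDerivAt (fun t => a t * b t) (2 * (a t * b t) * (s - a t * b t)) t :=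
    fun t => ((ha t).mul (hb t)).congr_deriv (by rw [hab t]; ring)
  have hk : 1 ≤ s / u₀ := (one_le_div hu₀).mpr hu₀s.le
  have hstart : a 0 * b 0 = logisticCurve s (s / u₀) 0 := by
    rw [logisticCurve_zero, div_div_cancel₀ (hu₀.trans hu₀s).ne', ← hbal, ← sq, hinit]
  intro t _
  have htraj : a t * b t = logisticCurve s (s / u₀) t :=
    eq_of_hasDerivAt_logistic hprod (hasDerivAt_logisticCurve hk) hstart t
  exact ⟨htraj, by rw [htraj, logisticCurve]⟩
end
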